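/- arXiv:math/0004023 — 5 statements merged into one kernel-verified Lean document; each statement's English description precedes it below -/
import Mathlib

section
/- Let k be a field, c ∈ k, and let φ : k[X,Y] → k[z] be the k-algebra homomorphism determined by φ(X) = z² − c and φ(Y) = z³ − cz (i.e. Y ↦ z(z² − c)). Then the kernel of φ is the principal ideal generated by Y² − X³ − cX² (equivalently, by Y² − X²(X + c)). -/
open Polynomial

namespace KerAux

variable {k : Type*} [Field k] (c : k)

noncomputable def φ (c : k) : MvPolynomial (Fin 2) k →ₐ[k] k[X] :=
  MvPolynomial.aeval ![X ^ 2 - C c, X ^ 3 - C c * X]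

noncomputable def f (c : k) : MvPolynomial (Fin 2) k :=
  (MvPolynomial.X 1) ^ 2 - (MvPolynomial.X 0) ^ 3 - MvPolynomial.C c * (MvPolynomial.X 0) ^ 2

noncomputable def ι : k[X] →ₐ[k] MvPolynomial (Fin 2) k :=
  Polynomial.aeval (MvPolynomial.X 0)

lemma phi_f : φ c (f c) = 0 := by
  simp only [φ, f, map_sub, map_mul, map_pow, MvPolynomial.aeval_X, MvPolynomial.aeval_C,
    Matrix.cons_val_zero, Matrix.cons_val_one, Matrix.head_cons, Polynomial.algebraMap_eq]
  ring

lemma div (p : MvPolynomial (Fin 2) k) :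
    ∃ A B : k[X], p - (ι A + ι B * MvPolynomial.X 1) ∈ Ideal.span {f c} := by
  induction p using MvPolynomial.induction_on with
  | C a => exact ⟨Polynomial.C a, 0, by simp [ι, MvPolynomial.algebraMap_eq]⟩
  | add p q hp hq =>
    obtain ⟨A, B, hp⟩ := hp
    obtain ⟨A', B', hq⟩ := hq
    refine ⟨A + A', B + B', ?_⟩
    have := Ideal.add_mem _ hp hq
    convert this using 1
    simp only [map_add]
    ring
  | mul_X p i hp =>
    obtain ⟨A, B, hp⟩ := hp
    fin_cases i
    · refine ⟨A * X, B * X, ?_⟩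
      have := Ideal.mul_mem_right (MvPolynomial.X 0) _ hp
      convert this using 1
      simp only [map_mul, ι, Polynomial.aeval_X]
      ring_nf
      rfl
    · refine ⟨B * (X ^ 3 + C c * X ^ 2), A, ?_⟩
      have h1 := Ideal.mul_mem_right (MvPolynomial.X 1) _ hp
      have h2 : ι B * f c ∈ Ideal.span {f c} :=
        Ideal.mul_mem_left _ _ (Ideal.subset_span rfl)
      have := Ideal.add_mem _ h1 h2
      convert this using 1
      simp only [map_mul, map_add, map_pow, ι, f, Polynomial.aeval_X, Polynomial.aeval_C,
        MvPolynomial.algebraMap_eq]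
      ring_nf
      rfl

lemma key (A B : k[X]) (h : A.comp (X ^ 2 - C c) + B.comp (X ^ 2 - C c) * (X ^ 3 - C c * X) = 0) :
    A = 0 ∧ B = 0 := by
  set g : k[X] := X ^ 2 - C c with hg
  have hgdeg : g.natDegree = 2 := natDegree_X_pow_sub_C
  have hgne : g.natDegree ≠ 0 := by omega
  have hxg : (X : k[X]) * g = X ^ 3 - C c * X := by rw [hg]; ring
  have hxgne : (X : k[X]) * g ≠ 0 := by
    intro h0
    have : ((X : k[X]) * g).natDegree = 3 := by
      rw [natDegree_mul X_ne_zero (by intro h'; rw [h'] at hgdeg; simp at hgdeg),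
        natDegree_X, hgdeg]
    rw [h0] at this; simp at this
  have hgl : g.leadingCoeff = 1 :=
    (Polynomial.monic_X_pow_sub_C c (n := 2) (by norm_num)).leadingCoeff
  have hcomp : ∀ P : k[X], P ≠ 0 → P.comp g ≠ 0 := by
    intro P hP h0
    have h1 := leadingCoeff_comp (p := P) (q := g) hgne
    rw [h0, leadingCoeff_zero, hgl, one_pow, mul_one] at h1
    exact hP (leadingCoeff_eq_zero.mp h1.symm)
  by_cases hB : B = 0
  · subst hB
    simp only [zero_comp, zero_mul, add_zero] at h
    refine ⟨?_, rfl⟩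
    by_contra hA
    exact hcomp A hA h
  · by_cases hA : A = 0
    · subst hA
      simp only [zero_comp, zero_add] at h
      rcases mul_eq_zero.mp h with h' | h'
      · exact absurd h' (hcomp B hB)
      · rw [← hxg] at h'; exact absurd h' hxgne
    · exfalso
      have hAc := hcomp A hA
      have hBc := hcomp B hB
      have heq : A.comp g = -(B.comp g * (X * g)) := by rw [hxg]; exact eq_neg_of_add_eq_zero_left h
      have hdeg : (A.comp g).natDegree = (B.comp g * (X * g)).natDegree := by
        rw [heq, natDegree_neg]
      rw [natDegree_comp, natDegree_mul hBc hxgne, natDegree_comp, hgdeg,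
        natDegree_mul X_ne_zero (by intro h'; rw [h'] at hgdeg; simp at hgdeg),
        natDegree_X, hgdeg] at hdeg
      omega

lemma phi_iota (A : k[X]) : φ c (ι A) = A.comp (X ^ 2 - C c) := by
  rw [comp_eq_aeval, ι, ← Polynomial.aeval_algHom_apply]
  congr 1
  simp [φ]

end KerAux

theorem kernel_of_normalization_pullback (k : Type*) [Field k] (c : k) :
    RingHom.ker (MvPolynomial.aeval
        ![X ^ 2 - C c, X ^ 3 - C c * X] : MvPolynomial (Fin 2) k →ₐ[k] k[X]) =
      Ideal.span {(MvPolynomial.X 1 : MvPolynomial (Fin 2) k) ^ 2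
        - (MvPolynomial.X 0) ^ 3 - MvPolynomial.C c * (MvPolynomial.X 0) ^ 2} := by
  show RingHom.ker (KerAux.φ c).toRingHom = Ideal.span {KerAux.f c}
  have hspan : ∀ m ∈ Ideal.span {KerAux.f c}, KerAux.φ c m = 0 := by
    intro m hm
    obtain ⟨q, rfl⟩ := Ideal.mem_span_singleton'.mp hm
    rw [map_mul, KerAux.phi_f, mul_zero]
  apply le_antisymm
  · intro p hp
    have hp0 : KerAux.φ c p = 0 := hp
    obtain ⟨A, B, hm⟩ := KerAux.div c p
    have hφm := hspan _ hm
    rw [map_sub, hp0, zero_sub, neg_eq_zero, map_add, map_mul] at hφm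
    have hX1 : KerAux.φ c (MvPolynomial.X 1) = X ^ 3 - C c * X := by simp [KerAux.φ]
    rw [KerAux.phi_iota, KerAux.phi_iota, hX1] at hφm
    obtain ⟨hA, hB⟩ := KerAux.key c A B hφm
    subst hA; subst hB
    simpa using hm
  · rw [Ideal.span_le]
    rintro x rfl
    exact KerAux.phi_f c
end

section
/- Let k be a field, c ∈ k. The k-subalgebra of k[z] generated by the two elements z² − c and z³ − cz equals the set of polynomials f ∈ k[z] that are congruent to a constant modulo the ideal (z² − c); that is, Algebra.adjoin k {z² − c, z³ − cz} = k·1 + (z² − c)·k[z] as k-submodules of k[z]. -/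
/-!
Both sides are the preimage of the constants under `k[X] → k[X] ⧸ (X ^ 2 - c)`: the generators
`X ^ 2 - c` and `X ^ 3 - c X = X (X ^ 2 - c)` lie in the ideal, and conversely the adjoined
algebra contains every `X ^ n (X ^ 2 - c)`, by induction on `n` using
`X ^ 2 = (X ^ 2 - c) + c`.
-/

open Polynomial

section ComapBot

variable {R B : Type*} [CommRing R] [CommRing B] [Algebra R B] (I : Ideal B)

theorem Subalgebra.toSubmodule_comap_mkₐ_bot :
    Subalgebra.toSubmodule ((⊥ : Subalgebra R (B ⧸ I)).comap (Ideal.Quotient.mkₐ R I))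
      = Submodule.span R {1} ⊔ I.restrictScalars R := by
  ext x
  simp only [Subalgebra.mem_toSubmodule, Subalgebra.mem_comap, Algebra.mem_bot, Set.mem_range,
    Submodule.mem_sup, Submodule.mem_span_singleton, Submodule.restrictScalars_mem,
    Ideal.Quotient.mkₐ_eq_mk, ← Ideal.Quotient.mk_algebraMap, Ideal.Quotient.eq,
    Algebra.smul_def, mul_one]
  constructor
  · rintro ⟨r, hr⟩
    exact ⟨_, ⟨r, rfl⟩, x - algebraMap R B r, by simpa using I.neg_mem hr, by abel⟩
  · rintro ⟨_, ⟨r, rfl⟩, y, hy, rfl⟩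
    exact ⟨r, by simpa using I.neg_mem hy⟩

theorem Subalgebra.mem_comap_mkₐ_bot_of_mem {x : B} (hx : x ∈ I) :
    x ∈ (⊥ : Subalgebra R (B ⧸ I)).comap (Ideal.Quotient.mkₐ R I) := by
  rw [Subalgebra.mem_comap, Ideal.Quotient.mkₐ_eq_mk, Ideal.Quotient.eq_zero_iff_mem.mpr hx]
  exact zero_mem _

end ComapBot

section AdjoinGenerators

variable {R : Type*} [CommRing R] (c : R)

theorem X_pow_mul_mem_adjoin (n : ℕ) :
    X ^ n * (X ^ 2 - C c) ∈ Algebra.adjoin R {X ^ 2 - C c, X ^ 3 - C c * X} := by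
  set A := Algebra.adjoin R {X ^ 2 - C c, X ^ 3 - C c * X}
  have hp : X ^ 2 - C c ∈ A := Algebra.subset_adjoin (by simp)
  induction n using Nat.twoStepInduction with
  | zero => simpa using hp
  | one => exact Algebra.subset_adjoin (by right; simp; ring)
  | more n ih _ =>
    have h : X ^ (n + 2) * (X ^ 2 - C c)
        = (X ^ 2 - C c) * (X ^ n * (X ^ 2 - C c)) + c • (X ^ n * (X ^ 2 - C c)) := by
      rw [smul_eq_C_mul]; ring
    rw [h]
    exact add_mem (mul_mem hp ih) (A.smul_mem ih c)

theorem mul_mem_adjoin (f : R[X]) :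
    f * (X ^ 2 - C c) ∈ Algebra.adjoin R {X ^ 2 - C c, X ^ 3 - C c * X} := by
  induction f using Polynomial.induction_on' with
  | add f g hf hg => rw [add_mul]; exact add_mem hf hg
  | monomial n a =>
    rw [← C_mul_X_pow_eq_monomial, mul_assoc]
    exact mul_mem (Subalgebra.algebraMap_mem _ a) (X_pow_mul_mem_adjoin c n)

end AdjoinGenerators

/-- Let `k` be a field, `c ∈ k`. The `k`-subalgebra of `k[z]` generated by
`z² − c` and `z³ − cz` equals, as a `k`-submodule of `k[z]`, the sum of the span of the
constants and the ideal generated by `z² − c`. -/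
theorem adjoin_eq_constants_sup_ideal (k : Type*) [Field k] (c : k) :
    Subalgebra.toSubmodule
        (Algebra.adjoin k ({X ^ 2 - C c, X ^ 3 - C c * X} : Set k[X]))
      = Submodule.span k ({1} : Set k[X]) ⊔
        Submodule.restrictScalars k (Ideal.span ({X ^ 2 - C c} : Set k[X])) := by
  apply le_antisymm
  · rw [← Subalgebra.toSubmodule_comap_mkₐ_bot]
    refine Subalgebra.toSubmodule.monotone (Algebra.adjoin_le ?_)
    have hp : X ^ 2 - C c ∈ Ideal.span {X ^ 2 - C c} := Ideal.subset_span rfl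
    have hX3 : X ^ 3 - C c * X = X * (X ^ 2 - C c) := by ring
    rintro f (rfl | rfl)
    · exact Subalgebra.mem_comap_mkₐ_bot_of_mem _ hp
    · exact Subalgebra.mem_comap_mkₐ_bot_of_mem _ (hX3 ▸ Ideal.mul_mem_left _ X hp)
  · refine sup_le (by simp [Submodule.span_le]) fun f hf ↦ ?_
    obtain ⟨q, rfl⟩ := Ideal.mem_span_singleton'.mp hf
    exact mul_mem_adjoin c q
end

section
/- Let k be a field, c ∈ k. The k-algebra homomorphism from k[X,Y]/(Y² − X³ − cX²) to k[z] induced by X ↦ z² − c, Y ↦ z³ − cz is injective, and it is an isomorphism of k-algebras onto the subalgebra Algebra.adjoin k {z² − c, z³ − cz} of k[z]. -/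
open Polynomial

/-!
Viewing `k[X,Y]` as `k[X][Y]`, the relation `f = Y² − X³ − cX²` is monic of degree 2 in `Y`, so
every class modulo `f` has a representative `a(X) + b(X)·Y`, which is sent to
`a(z² − c) + b(z² − c)·z(z² − c)`. The first summand only has monomials of even degree in `z`
and the second only of odd degree, so the image vanishes only if `a = b = 0`; hence the kernel
is `(f)`.
-/

theorem Ideal.Quotient.range_liftₐ {R A B : Type*} [CommSemiring R] [Ring A] [Algebra R A]
    [Semiring B] [Algebra R B] (I : Ideal A) [I.IsTwoSided] (f : A →ₐ[R] B)
    (hI : ∀ a ∈ I, f a = 0) : (Ideal.Quotient.liftₐ I f hI).range = f.range := by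
  conv_rhs => rw [← Ideal.Quotient.liftₐ_comp I f hI]
  rw [AlgHom.range_comp, (AlgHom.range_eq_top _).mpr (Ideal.Quotient.mkₐ_surjective R I),
    Algebra.map_top]

theorem Polynomial.eq_zero_of_expand_two_add_X_mul_expand_two_eq_zero {R : Type*}
    [CommSemiring R] {p q : R[X]} (h : expand R 2 p + X * expand R 2 q = 0) : p = 0 ∧ q = 0 := by
  have odd_coeff (f : R[X]) (n : ℕ) : (expand R 2 f).coeff (2 * n + 1) = 0 := by
    rw [coeff_expand two_pos, if_neg (by omega)]
  have X_mul_even_coeff : ∀ (f : R[X]) (n : ℕ), (X * expand R 2 f).coeff (2 * n) = 0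
    | f, 0 => coeff_X_mul_zero _
    | f, n + 1 => by rw [show 2 * (n + 1) = 2 * n + 1 + 1 by ring, coeff_X_mul, odd_coeff]
  constructor <;> ext n
  · have := congr(coeff $h (2 * n))
    rwa [coeff_add, X_mul_even_coeff, add_zero, coeff_expand_mul' two_pos] at this
  · have := congr(coeff $h (2 * n + 1))
    rwa [coeff_add, odd_coeff, zero_add, coeff_X_mul, coeff_expand_mul' two_pos] at this

theorem Polynomial.aeval_X_sq_sub_C {R : Type*} [CommRing R] (c : R) (f : R[X]) :
    aeval (X ^ 2 - C c) f = expand R 2 (taylor (-c) f) := by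
  rw [taylor_apply, expand_eq_comp_X_pow, comp_assoc, ← comp_eq_aeval]
  simp [sub_eq_add_neg]

theorem Polynomial.eq_zero_of_aeval_X_sq_sub_C_add_mul_eq_zero {R : Type*} [CommRing R] (c : R)
    {a b : R[X]} (h : aeval (X ^ 2 - C c) a + aeval (X ^ 2 - C c) b * (X ^ 3 - C c * X) = 0) :
    a = 0 ∧ b = 0 := by
  have h' : expand R 2 (taylor (-c) a) + X * expand R 2 (taylor (-c) (X * b)) = 0 := by
    rw [← aeval_X_sq_sub_C, ← aeval_X_sq_sub_C, ← h, map_mul, aeval_X]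
    ring
  obtain ⟨ha, hXb⟩ := eq_zero_of_expand_two_add_X_mul_expand_two_eq_zero h'
  rw [taylor_eq_zero] at ha hXb
  exact ⟨ha, isRegular_X.left (hXb.trans (mul_zero X).symm)⟩

namespace Polynomial.Bivariate

theorem nodalCubic_dvd_of_aevalAeval_eq_zero {R : Type*} [CommRing R] (c : R)
    {q : R[X][Y]} (hq : aevalAeval (X ^ 2 - C c) (X ^ 3 - C c * X) q = 0) :
    Y ^ 2 - C (X ^ 3 + C c * X ^ 2) ∣ q := by
  nontriviality R
  set G : R[X][Y] := Y ^ 2 - C (X ^ 3 + C c * X ^ 2)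
  have hG : G.Monic := monic_X_pow_sub_C _ two_ne_zero
  have hG_root : aevalAeval (X ^ 2 - C c) (X ^ 3 - C c * X) G = 0 := by
    simp only [G, map_sub, map_pow, map_add, map_mul, aevalAeval_Y, aevalAeval_C, aeval_X, aeval_C,
      algebraMap_eq]
    ring
  rw [← modByMonic_eq_zero_iff_dvd hG]
  set r := q %ₘ G with hr
  have hr_deg : r.degree ≤ 1 := by
    have := degree_modByMonic_lt q hG
    rw [degree_X_pow_sub_C two_pos] at this
    exact Order.le_of_lt_succ this
  have hr_root : aevalAeval (X ^ 2 - C c) (X ^ 3 - C c * X) r = 0 := by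
    rw [hr, modByMonic_eq_sub_mul_div, map_sub, map_mul, hq, hG_root, zero_mul, sub_zero]
  rw [eq_X_add_C_of_degree_le_one hr_deg] at hr_root ⊢
  simp only [map_add, map_mul, aevalAeval_C, aevalAeval_Y] at hr_root
  obtain ⟨h0, h1⟩ := eq_zero_of_aeval_X_sq_sub_C_add_mul_eq_zero c (by rwa [add_comm] at hr_root)
  simp [h0, h1]

theorem aeval_comp_equivMvPolynomial {R A : Type*} [CommSemiring R] [CommSemiring A]
    [Algebra R A] (x y : A) :
    (MvPolynomial.aeval ![x, y]).comp (equivMvPolynomial R : R[X][Y] →ₐ[R] MvPolynomial (Fin 2) R)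
      = aevalAeval x y := by
  ext <;> simp

theorem ker_aeval_nodalCubic_eq_span {R : Type*} [CommRing R] (c : R) :
    RingHom.ker (MvPolynomial.aeval ![X ^ 2 - C c, X ^ 3 - C c * X] :
        MvPolynomial (Fin 2) R →ₐ[R] R[X]) =
      Ideal.span {(MvPolynomial.X 1 : MvPolynomial (Fin 2) R) ^ 2
          - (MvPolynomial.X 0) ^ 3 - MvPolynomial.C c * (MvPolynomial.X 0) ^ 2} := by
  have hf : (MvPolynomial.X 1 : MvPolynomial (Fin 2) R) ^ 2 - MvPolynomial.X 0 ^ 3 - MvPolynomial.C c * MvPolynomial.X 0 ^ 2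
      = equivMvPolynomial R (Y ^ 2 - C (X ^ 3 + C c * X ^ 2)) := by
    simp only [map_sub, map_pow, map_add, map_mul, MvPolynomial.C_mul', equivMvPolynomial_X,
      equivMvPolynomial_C_X, equivMvPolynomial_C_C]
    ring
  refine le_antisymm (fun p hp => ?_) ?_
  · obtain ⟨q, rfl⟩ := (equivMvPolynomial R).surjective p
    have hq : aevalAeval (X ^ 2 - C c) (X ^ 3 - C c * X) q = 0 := by
      rw [← aeval_comp_equivMvPolynomial]
      exact hp
    rw [Ideal.mem_span_singleton, hf]
    exact _root_.map_dvd (equivMvPolynomial R) (nodalCubic_dvd_of_aevalAeval_eq_zero c hq)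
  · rw [Ideal.span_le, Set.singleton_subset_iff, SetLike.mem_coe, RingHom.mem_ker]
    simp only [map_sub, map_pow, map_mul, MvPolynomial.aeval_X, MvPolynomial.algHom_C,
      Matrix.cons_val_zero, Matrix.cons_val_one, Matrix.cons_val_fin_one, algebraMap_eq]
    ring

end Polynomial.Bivariate

/-- Let `k` be a field, `c ∈ k`. The `k`-algebra homomorphism from
`k[X,Y]/(Y² − X³ − cX²)` to `k[z]` induced by `X ↦ z² − c`, `Y ↦ z³ − cz` is injective,
and it is an isomorphism onto the subalgebra `Algebra.adjoin k {z² − c, z³ − cz}` of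
`k[z]`, i.e. its range is exactly that subalgebra. -/
theorem quotient_map_injective_range_adjoin (k : Type*) [Field k] (c : k)
    (h : ∀ a ∈ Ideal.span {(MvPolynomial.X 1 : MvPolynomial (Fin 2) k) ^ 2
          - (MvPolynomial.X 0) ^ 3 - MvPolynomial.C c * (MvPolynomial.X 0) ^ 2},
        (MvPolynomial.aeval ![X ^ 2 - C c, X ^ 3 - C c * X] : MvPolynomial (Fin 2) k →ₐ[k] k[X]) a
          = 0) :
    Function.Injective
        (Ideal.Quotient.liftₐ _
          (MvPolynomial.aeval ![X ^ 2 - C c, X ^ 3 - C c * X] : MvPolynomial (Fin 2) k →ₐ[k] k[X])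
          h) ∧
      (Ideal.Quotient.liftₐ _
          (MvPolynomial.aeval ![X ^ 2 - C c, X ^ 3 - C c * X] : MvPolynomial (Fin 2) k →ₐ[k] k[X])
          h).range
        = Algebra.adjoin k ({X ^ 2 - C c, X ^ 3 - C c * X} : Set k[X]) := by
  refine ⟨(Ideal.injective_lift_iff h).mpr
    (Bivariate.ker_aeval_nodalCubic_eq_span c), ?_⟩
  rw [Ideal.Quotient.range_liftₐ, ← Algebra.adjoin_range_eq_range_aeval,
    Matrix.range_cons_cons_empty]
end

section
/- Let k be a field and c ∈ k. The polynomial Y² − X³ − cX² generates a prime ideal in k[X,Y]; equivalently, the quotient ring k[X,Y]/(Y² − X³ − cX²) is an integral domain. -/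
/-!
Viewing `k[X,Y]` as `k[X][Y]`, the cubic is the monic polynomial `Y² − f` with
`f = X³ + cX² ∈ k[X]`. Since `f` has odd degree it is not a square in `k[X]`, and since `k[X]`
is integrally closed it is not a square in `k(X)` either. Hence `Y² − f` is irreducible over
`k(X)`, so over `k[X]` by Gauss's lemma, and irreducible elements of the UFD `k[X][Y]` are prime.
-/

open Polynomial

namespace Polynomial

theorem not_isSquare_of_odd_natDegree {R : Type*} [CommRing R] [IsDomain R] {p : R[X]}
    (hp : Odd p.natDegree) : ¬IsSquare p := by
  rintro ⟨r, rfl⟩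
  rcases eq_or_ne r 0 with rfl | hr
  · simp at hp
  · rw [natDegree_mul hr hr] at hp
    exact Nat.not_odd_iff_even.mpr ⟨_, rfl⟩ hp

theorem irreducible_X_sq_sub_C_of_not_isSquare {R : Type*} [CommRing R] [IsDomain R]
    [IsIntegrallyClosed R] {a : R} (ha : ¬IsSquare a) : Irreducible (X ^ 2 - C a : R[X]) := by
  have hmonic : (X ^ 2 - C a : R[X]).Monic := monic_X_pow_sub_C a two_ne_zero
  rw [hmonic.irreducible_iff_irreducible_map_fraction_map (K := FractionRing R),
    Polynomial.map_sub, Polynomial.map_pow, map_X, map_C]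
  refine X_pow_sub_C_irreducible_of_prime Nat.prime_two fun b hb => ha ?_
  have hb_integral : IsIntegral R b := ⟨X ^ 2 - C a, hmonic, by simp [hb]⟩
  obtain ⟨r, hr⟩ := IsIntegrallyClosed.isIntegral_iff.mp hb_integral
  exact ⟨r, IsFractionRing.injective R (FractionRing R) (by rw [map_mul, hr, ← sq, hb])⟩

end Polynomial

namespace MvPolynomial

variable (R : Type*) [CommRing R]

noncomputable def finTwoAlgEquivPolynomialPolynomial : MvPolynomial (Fin 2) R ≃ₐ[R] R[X][X] :=
  (renameEquiv R finSuccEquivLast).trans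
    ((optionEquivLeft R (Fin 1)).trans (Polynomial.mapAlgEquiv (uniqueAlgEquiv R (Fin 1))))

@[simp]
theorem finTwoAlgEquivPolynomialPolynomial_C (a : R) :
    finTwoAlgEquivPolynomialPolynomial R (C a) = Polynomial.C (Polynomial.C a) :=
  (finTwoAlgEquivPolynomialPolynomial R).commutes a

@[simp]
theorem finTwoAlgEquivPolynomialPolynomial_X_zero :
    finTwoAlgEquivPolynomialPolynomial R (X 0) = Polynomial.C Polynomial.X := by
  simp [finTwoAlgEquivPolynomialPolynomial, show finSuccEquivLast (0 : Fin 2) = some 0 from rfl]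

@[simp]
theorem finTwoAlgEquivPolynomialPolynomial_X_one :
    finTwoAlgEquivPolynomialPolynomial R (X 1) = Polynomial.X := by
  simp [finTwoAlgEquivPolynomialPolynomial, show finSuccEquivLast (1 : Fin 2) = none from rfl]

end MvPolynomial

/-- Let `k` be a field and `c ∈ k`. The polynomial `Y² − X³ − cX²`
generates a prime ideal in `k[X,Y]`; equivalently, the quotient ring
`k[X,Y]/(Y² − X³ − cX²)` is an integral domain. -/
theorem cubic_ideal_isPrime (k : Type*) [Field k] (c : k) :
    (Ideal.span {(MvPolynomial.X 1 : MvPolynomial (Fin 2) k) ^ 2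
        - (MvPolynomial.X 0) ^ 3 - MvPolynomial.C c * (MvPolynomial.X 0) ^ 2}).IsPrime ∧
      IsDomain (MvPolynomial (Fin 2) k ⧸
        Ideal.span {(MvPolynomial.X 1 : MvPolynomial (Fin 2) k) ^ 2
          - (MvPolynomial.X 0) ^ 3 - MvPolynomial.C c * (MvPolynomial.X 0) ^ 2}) := by
  let e := MvPolynomial.finTwoAlgEquivPolynomialPolynomial k
  have he : e ((MvPolynomial.X 1 : MvPolynomial (Fin 2) k) ^ 2
      - (MvPolynomial.X 0) ^ 3 - MvPolynomial.C c * (MvPolynomial.X 0) ^ 2)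
      = X ^ 2 - C (X ^ 3 + C c * X ^ 2) := by
    simp only [e, map_sub, map_add, map_pow, map_mul, MvPolynomial.finTwoAlgEquivPolynomialPolynomial_X_zero,
      MvPolynomial.finTwoAlgEquivPolynomialPolynomial_X_one,
      MvPolynomial.finTwoAlgEquivPolynomialPolynomial_C]
    ring
  have hdeg : (X ^ 3 + C c * X ^ 2 : k[X]).natDegree = 3 := by compute_degree!
  have hirr : Irreducible (X ^ 2 - C (X ^ 3 + C c * X ^ 2) : k[X][X]) :=
    irreducible_X_sq_sub_C_of_not_isSquare
      (not_isSquare_of_odd_natDegree (by rw [hdeg]; decide))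
  have hprime : Prime ((MvPolynomial.X 1 : MvPolynomial (Fin 2) k) ^ 2
      - (MvPolynomial.X 0) ^ 3 - MvPolynomial.C c * (MvPolynomial.X 0) ^ 2) := by
    rw [← MulEquiv.prime_iff e.toMulEquiv]
    simpa [he] using hirr.prime
  have hspan := (Ideal.span_singleton_prime hprime.ne_zero).mpr hprime
  exact ⟨hspan, (Ideal.Quotient.isDomain_iff_prime _).mpr hspan⟩
end

section
/- Let k be a field, c ∈ k, and let A = Algebra.adjoin k {z² − c, z³ − cz} be the k-subalgebra of k[z] generated by z² − c and z³ − cz. Then k[z] is generated as an A-module by the two elements 1 and z; in particular, k[z] is a finite (hence integral) extension of A. -/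
open Polynomial

/-- Let `k` be a field, `c ∈ k`, and let
`A = Algebra.adjoin k {z² − c, z³ − cz}` be the `k`-subalgebra of `k[z]` generated by
`z² − c` and `z³ − cz`. Then `k[z]` is generated as an `A`-module by the two elements `1`
and `z`; in particular, `k[z]` is a finite (hence integral) extension of `A`. -/
theorem polynomialRing_finite_over_cubic_subalgebra (k : Type*) [Field k] (c : k) :
    Submodule.span (Algebra.adjoin k ({X ^ 2 - C c, X ^ 3 - C c * X} : Set k[X]))
        ({1, X} : Set k[X]) = ⊤ ∧
      Module.Finite (Algebra.adjoin k ({X ^ 2 - C c, X ^ 3 - C c * X} : Set k[X])) k[X] := by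
  set A := Algebra.adjoin k ({X ^ 2 - C c, X ^ 3 - C c * X} : Set k[X]) with hA
  have hX2 : (X ^ 2 : k[X]) ∈ A := by
    have h1 : (X ^ 2 - C c : k[X]) ∈ A := Algebra.subset_adjoin (by simp)
    have h2 : (C c : k[X]) ∈ A := by
      simpa using Subalgebra.algebraMap_mem A c
    simpa using A.add_mem h1 h2
  have key : ∀ n : ℕ, (X ^ n : k[X]) ∈ Submodule.span A ({1, X} : Set k[X]) := by
    intro n
    induction n using Nat.strong_induction_on with
    | _ n ih =>
      match n with
      | 0 => simpa using Submodule.subset_span (show (1 : k[X]) ∈ ({1, X} : Set k[X]) by simp)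
      | 1 => simpa using Submodule.subset_span (show (X : k[X]) ∈ ({1, X} : Set k[X]) by simp)
      | (m + 2) =>
        have h := Submodule.smul_mem (Submodule.span A ({1, X} : Set k[X]))
          (⟨X ^ 2, hX2⟩ : A) (ih m (by omega))
        have heq : (⟨X ^ 2, hX2⟩ : A) • (X ^ m : k[X]) = X ^ (m + 2) := by
          show (X ^ 2 : k[X]) * X ^ m = X ^ (m + 2)
          ring
        rwa [heq] at h
  have hspan : Submodule.span A ({1, X} : Set k[X]) = ⊤ := by
    rw [eq_top_iff]
    intro f _
    induction f using Polynomial.induction_on' with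
    | add p q hp hq => exact Submodule.add_mem _ (hp trivial) (hq trivial)
    | monomial n a =>
      have ha : (C a : k[X]) ∈ A := by simpa using Subalgebra.algebraMap_mem A a
      have h := Submodule.smul_mem (Submodule.span A ({1, X} : Set k[X]))
        (⟨C a, ha⟩ : A) (key n)
      have heq : (⟨C a, ha⟩ : A) • (X ^ n : k[X]) = (monomial n a : k[X]) := by
        show (C a : k[X]) * X ^ n = monomial n a
        simp [C_mul_X_pow_eq_monomial]
      rwa [heq] at h
  classical
  refine ⟨hspan, ⟨⟨{1, X}, ?_⟩⟩⟩
  simpa using hspan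
end
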